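/- Let 𝔤 be a metric Lie algebra and ℓ : ℝ → ℝ a smooth function with ℓ(0) = 0 and ℓ(1) = 1. Define χ : P₀𝔤 × P₀𝔤 → P₀𝔤 × ℝ by χ(γ₁,γ₂) := ([γ₁,γ₂] − ℓ·[γ₁(1),γ₂(1)], 2∫₀¹ ⟨γ₁'(τ), γ₂(τ)⟩ dτ) (pointwise bracket; ℓ·x denotes τ ↦ ℓ(τ)x; γ' the derivative). Then: (i) the first component of χ(γ₁,γ₂) lies in L₀𝔤, so χ takes values in L̂₀𝔤 = L₀𝔤 × ℝ; and (ii) the symmetric part of χ is a boundary term valued in the central ℝ-summand: χ(γ₁,γ₂) + χ(γ₂,γ₁) = (0, 2⟨γ₁(1), γ₂(1)⟩) for all γ₁,γ₂ ∈ P₀𝔤. -/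

import Mathlib

/-- The based path space `P₀𝔤`: smooth maps `ℝ → 𝔤` vanishing at `0`. -/
def PathAlg (E : Type*) [NormedAddCommGroup E] [NormedSpace ℝ E] : Set (ℝ → E) :=
  {γ | ContDiff ℝ (⊤ : ℕ∞) γ ∧ γ 0 = 0}

/-- The based loop space `L₀𝔤`: based paths also vanishing at `1`. -/
def LoopAlg (E : Type*) [NormedAddCommGroup E] [NormedSpace ℝ E] : Set (ℝ → E) :=
  {γ | γ ∈ PathAlg E ∧ γ 1 = 0}

/-- The adjustment datum
`χ(γ₁,γ₂) = ([γ₁,γ₂] − ℓ·[γ₁(1),γ₂(1)], 2∫₀¹ ⟨γ₁'(τ), γ₂(τ)⟩ dτ)` valued in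
`L̂₀𝔤 = L₀𝔤 × ℝ`. -/
noncomputable def chiHat {E : Type*} [NormedAddCommGroup E] [NormedSpace ℝ E]
    (br : E →ₗ[ℝ] E →ₗ[ℝ] E) (B : E →ₗ[ℝ] E →ₗ[ℝ] ℝ) (ℓ : ℝ → ℝ)
    (γ₁ γ₂ : ℝ → E) : (ℝ → E) × ℝ :=
  ((fun τ => br (γ₁ τ) (γ₂ τ) - ℓ τ • br (γ₁ 1) (γ₂ 1)),
    2 * ∫ τ in (0:ℝ)..1, B (deriv γ₁ τ) (γ₂ τ))

/-- Continuous upgrade of a bilinear map on a finite-dimensional space. -/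
noncomputable def bilinCLM {E F : Type*} [NormedAddCommGroup E] [NormedSpace ℝ E]
    [FiniteDimensional ℝ E] [NormedAddCommGroup F] [NormedSpace ℝ F]
    (b : E →ₗ[ℝ] E →ₗ[ℝ] F) : E →L[ℝ] E →L[ℝ] F :=
  LinearMap.toContinuousLinearMap
    { toFun := fun x => LinearMap.toContinuousLinearMap (b x)
      map_add' := fun x y => by ext z; simp
      map_smul' := fun c x => by ext z; simp }

@[simp] lemma bilinCLM_apply {E F : Type*} [NormedAddCommGroup E] [NormedSpace ℝ E]
    [FiniteDimensional ℝ E] [NormedAddCommGroup F] [NormedSpace ℝ F]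
    (b : E →ₗ[ℝ] E →ₗ[ℝ] F) (x y : E) : bilinCLM b x y = b x y := rfl

/-- For a metric Lie algebra `𝔤` (encoded as a finite-dimensional normed
space `E` with Lie bracket `br` and invariant nondegenerate symmetric form `B`) and a
smooth `ℓ : ℝ → ℝ` with `ℓ(0) = 0`, `ℓ(1) = 1`, the adjustment datum
`χ(γ₁,γ₂) := ([γ₁,γ₂] − ℓ·[γ₁(1),γ₂(1)], 2∫₀¹⟨γ₁',γ₂⟩)`
(i) takes values in `L̂₀𝔤 = L₀𝔤 × ℝ`, and (ii) has symmetric part the boundary term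
`χ(γ₁,γ₂) + χ(γ₂,γ₁) = (0, 2⟨γ₁(1), γ₂(1)⟩)` valued in the central `ℝ`-summand. -/
theorem string_adjustment_chi_values_and_symmetric_part
    {E : Type*} [NormedAddCommGroup E] [NormedSpace ℝ E] [FiniteDimensional ℝ E]
    (br : E →ₗ[ℝ] E →ₗ[ℝ] E)
    (h_anti : ∀ x y : E, br x y = - br y x)
    (h_jacobi : ∀ x y z : E,
      br x (br y z) + br y (br z x) + br z (br x y) = 0)
    (B : E →ₗ[ℝ] E →ₗ[ℝ] ℝ)
    (h_B_symm : ∀ x y : E, B x y = B y x)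
    (h_B_inv : ∀ x y z : E, B (br x y) z = B x (br y z))
    (h_B_nondeg : ∀ x : E, (∀ y : E, B x y = 0) → x = 0)
    (ℓ : ℝ → ℝ) (hℓ : ContDiff ℝ (⊤ : ℕ∞) ℓ) (hℓ0 : ℓ 0 = 0) (hℓ1 : ℓ 1 = 1) :
    (∀ γ₁ ∈ PathAlg E, ∀ γ₂ ∈ PathAlg E,
      (chiHat br B ℓ γ₁ γ₂).1 ∈ LoopAlg E) ∧
    (∀ γ₁ ∈ PathAlg E, ∀ γ₂ ∈ PathAlg E,
      chiHat br B ℓ γ₁ γ₂ + chiHat br B ℓ γ₂ γ₁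
        = ((fun _ => (0 : E)), 2 * B (γ₁ 1) (γ₂ 1))) := by
  set brc := bilinCLM br with hbrc
  set Bc := bilinCLM B with hBc
  constructor
  · rintro γ₁ ⟨hγ₁, hγ₁0⟩ γ₂ ⟨hγ₂, hγ₂0⟩
    refine ⟨⟨?_, ?_⟩, ?_⟩
    · have h : ContDiff ℝ (⊤ : ℕ∞) fun τ => brc (γ₁ τ) (γ₂ τ) :=
        (brc.contDiff.comp hγ₁).clm_apply hγ₂
      exact h.sub (hℓ.smul contDiff_const)
    · simp [chiHat, hγ₁0, hℓ0]
    · simp [chiHat, hℓ1]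
  · rintro γ₁ ⟨hγ₁, hγ₁0⟩ γ₂ ⟨hγ₂, hγ₂0⟩
    have hbranti : ∀ τ, br (γ₂ τ) (γ₁ τ) = - br (γ₁ τ) (γ₂ τ) := fun τ => h_anti _ _
    refine Prod.ext ?_ ?_
    · funext τ
      simp only [chiHat, Prod.fst_add, Pi.add_apply]
      rw [hbranti τ, hbranti 1, smul_neg]
      abel
    · simp only [chiHat, Prod.snd_add]
      -- derivatives
      have hd₁ : Differentiable ℝ γ₁ := hγ₁.differentiable (by simp)
      have hd₂ : Differentiable ℝ γ₂ := hγ₂.differentiable (by simp)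
      have hc₁ : Continuous (deriv γ₁) :=
        ((contDiff_infty_iff_deriv.mp (hγ₁.of_le (by simp))).2.continuous)
      have hc₂ : Continuous (deriv γ₂) :=
        ((contDiff_infty_iff_deriv.mp (hγ₂.of_le (by simp))).2.continuous)
      have hcont : ∀ (f g : ℝ → E), Continuous f → Continuous g →
          Continuous fun τ => B (f τ) (g τ) := by
        intro f g hf hg
        have : Continuous fun τ => Bc (f τ) (g τ) :=
          (Bc.continuous.comp hf).clm_apply hg
        simpa [hBc] using this
      have hI₁ : IntervalIntegrable (fun τ => B (deriv γ₁ τ) (γ₂ τ))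
          MeasureTheory.volume 0 1 :=
        (hcont _ _ hc₁ hd₂.continuous).intervalIntegrable _ _
      have hI₂ : IntervalIntegrable (fun τ => B (γ₁ τ) (deriv γ₂ τ))
          MeasureTheory.volume 0 1 :=
        (hcont _ _ hd₁.continuous hc₂).intervalIntegrable _ _
      have hderiv : ∀ τ ∈ Set.uIcc (0:ℝ) 1,
          HasDerivAt (fun τ => Bc (γ₁ τ) (γ₂ τ))
            (B (deriv γ₁ τ) (γ₂ τ) + B (γ₁ τ) (deriv γ₂ τ)) τ := by
        intro τ _
        have h1 : HasDerivAt γ₁ (deriv γ₁ τ) τ := (hd₁ τ).hasDerivAt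
        have h2 : HasDerivAt γ₂ (deriv γ₂ τ) τ := (hd₂ τ).hasDerivAt
        have hc : HasDerivAt (fun τ => Bc (γ₁ τ)) (Bc (deriv γ₁ τ)) τ :=
          (Bc.hasFDerivAt.comp_hasDerivAt τ h1)
        simpa [hBc] using hc.clm_apply h2
      have hFTC : (∫ τ in (0:ℝ)..1, (B (deriv γ₁ τ) (γ₂ τ) + B (γ₁ τ) (deriv γ₂ τ)))
          = B (γ₁ 1) (γ₂ 1) := by
        rw [intervalIntegral.integral_eq_sub_of_hasDerivAt hderiv (hI₁.add hI₂)]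
        simp [hγ₁0, hBc]
      have hsplit : (∫ τ in (0:ℝ)..1, B (deriv γ₁ τ) (γ₂ τ))
          + (∫ τ in (0:ℝ)..1, B (γ₁ τ) (deriv γ₂ τ)) = B (γ₁ 1) (γ₂ 1) := by
        rw [← intervalIntegral.integral_add hI₁ hI₂]; exact hFTC
      have hsymm : (∫ τ in (0:ℝ)..1, B (deriv γ₂ τ) (γ₁ τ))
          = ∫ τ in (0:ℝ)..1, B (γ₁ τ) (deriv γ₂ τ) := by
        congr 1; funext τ; exact h_B_symm _ _
      rw [hsymm]
      linarith [hsplit]
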